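/- arXiv:2006.16544 — 3 statements merged into one kernel-verified Lean document; each statement's English description precedes it below -/
import Mathlib

section
/- For every 0 < p < 1 and every constant C > 0 there is n₀ such that the following holds for all n ≥ n₀. Let V be an n-element set, let U₁,…,U_s ⊂ V with s ≤ n^C, and let G₁,…,G_t be graphs on vertex set V with t ≤ n^C. Suppose |U_i| ≥ α_i·n for constants 0 < α_i < 1 (i = 1,…,s) and that G_j has at least β_j·C(n,2) edges for constants 0 < β_j < 1 (j = 1,…,t). Then there exists a subset R ⊂ V such that (a) | |R| − pn | ≤ p·n^{2/3}; (b) for all i, |U_i ∩ R| ≥ (α_i − 2n^{−1/3})·|R|; and (c) for all j, the number of edges of G_j with both endpoints in R is at least (β_j − 3n^{−1/3})·C(|R|,2). -/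
/-!
Choose `R` at random, keeping each vertex independently with probability `p`. Every count
`|R|`, `|U_i ∩ R|` and `|N_{G_j}(v) ∩ R|` is a sum of `n` independent bounded variables, so by
Hoeffding it misses its mean by `ε = p² n^{2/3} / 8` with probability at most
`2 exp(-p⁴ n^{1/3} / 128)`; against the polynomially many (`≤ n^{C+2}`) counts a union bound
leaves an `R` on which none of them does. Properties (a) and (b) are immediate. For (c),
`2 e(G_j[R]) = ∑_{v ∈ R} |N(v) ∩ R| ≥ p ∑_{v ∈ R} deg v - ε|R|`, and
`∑_{v ∈ R} deg v = ∑_u |N(u) ∩ R| ≥ 2p e(G_j) - εn`.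
-/

open Finset MeasureTheory ProbabilityTheory Real Filter Topology unitInterval

section Concentration

/-- `ω : V → Bool` encodes the random subset `{v | ω v}`. -/
noncomputable abbrev bernoulliPi (V : Type*) [Fintype V] (p : I) : Measure (V → Bool) :=
  Measure.pi fun _ : V ↦ Ber(true, false, p)

variable {V : Type*} [Fintype V]

lemma bernoulliPi_measureReal_sum_ge_le (p : I) (f : V → Bool → ℝ)
    (hf : ∀ v b, f v b ∈ Set.Icc (-1) 1) {ε : ℝ} (hε : 0 ≤ ε) :
    (bernoulliPi V p).real
        {ω | ε ≤ ∑ v, (f v (ω v) - (p * f v true + (1 - p) * f v false))} ≤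
      exp (-ε ^ 2 / (2 * Fintype.card V)) := by
  set μ := bernoulliPi V p
  have hmean (v : V) : μ[fun ω ↦ f v (ω v)] = p * f v true + (1 - p) * f v false := by
    rw [integral_comp_eval (Measurable.of_discrete.aestronglyMeasurable),
      integral_bernoulliMeasure, smul_eq_mul, smul_eq_mul]
  have hsubG : ∀ v ∈ (univ : Finset V), HasSubgaussianMGF
      (fun ω ↦ f v (ω v) - (p * f v true + (1 - p) * f v false)) 1 μ := by
    intro v _
    have h := hasSubgaussianMGF_of_mem_Icc (μ := μ) (X := fun ω ↦ f v (ω v))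
      Measurable.of_discrete.aemeasurable (ae_of_all _ fun ω ↦ hf v (ω v))
    rw [hmean] at h
    convert h
    norm_num
  have hindep : iIndepFun (fun v ω ↦ f v (ω v) - (p * f v true + (1 - p) * f v false)) μ :=
    iIndepFun_pi (X := fun v b ↦ f v b - (p * f v true + (1 - p) * f v false))
      fun _ ↦ Measurable.of_discrete.aemeasurable
  simpa using HasSubgaussianMGF.measure_sum_ge_le_of_iIndepFun hindep hsubG hε

lemma bernoulliPi_measureReal_abs_card_inter_sub_ge_le [DecidableEq V] (p : I) (A : Finset V)
    {ε : ℝ} (hε : 0 ≤ ε) :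
    (bernoulliPi V p).real {ω | ε ≤ |(#(A ∩ ({v | ω v} : Finset V)) : ℝ) - p * #A|} ≤
      2 * exp (-ε ^ 2 / (2 * Fintype.card V)) := by
  let f (c : ℝ) (v : V) (b : Bool) : ℝ := if v ∈ A ∧ b then c else 0
  have hf (c : ℝ) (hc : |c| ≤ 1) (v : V) (b : Bool) : f c v b ∈ Set.Icc (-1) 1 := by
    unfold f; split_ifs
    · exact abs_le.mp hc
    · norm_num
  have hsum (c : ℝ) (ω : V → Bool) :
      ∑ v, (f c v (ω v) - (p * f c v true + (1 - p) * f c v false)) =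
        c * ((#(A ∩ ({v | ω v} : Finset V)) : ℝ) - p * #A) := by
    simp [f, ← sum_filter, sum_sub_distrib, filter_and]
    ring
  have hup := bernoulliPi_measureReal_sum_ge_le p (f 1) (hf 1 (by norm_num)) hε
  have hdown := bernoulliPi_measureReal_sum_ge_le p (f (-1)) (hf (-1) (by norm_num)) hε
  simp only [hsum, one_mul, neg_one_mul] at hup hdown
  simp only [le_abs, Set.ofPred_or]
  exact (measureReal_union_le _ _).trans (by linarith)

lemma exists_forall_abs_card_inter_sub_lt [DecidableEq V] {p : ℝ} (hp0 : 0 ≤ p) (hp1 : p ≤ 1)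
    {ι : Type*} [Fintype ι] (A : ι → Finset V) {ε : ℝ} (hε : 0 ≤ ε)
    (hfew : Fintype.card ι * (2 * exp (-ε ^ 2 / (2 * Fintype.card V))) < 1) :
    ∃ R : Finset V, ∀ l, |(#(A l ∩ R) : ℝ) - p * #(A l)| < ε := by
  set μ := bernoulliPi V ⟨p, hp0, hp1⟩
  let bad (l : ι) : Set (V → Bool) :=
    {ω | ε ≤ |(#(A l ∩ ({v | ω v} : Finset V)) : ℝ) - p * #(A l)|}
  have hbad : μ.real (⋃ l, bad l) < μ.real Set.univ := calc
    μ.real (⋃ l, bad l) ≤ ∑ l, μ.real (bad l) := measureReal_iUnion_fintype_le _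
    _ ≤ ∑ _ : ι, 2 * exp (-ε ^ 2 / (2 * Fintype.card V)) :=
        sum_le_sum fun l _ ↦ bernoulliPi_measureReal_abs_card_inter_sub_ge_le _ (A l) hε
    _ < μ.real Set.univ := by simpa using hfew
  obtain ⟨ω, hω⟩ : ∃ ω, ω ∉ ⋃ l, bad l := by
    by_contra! h
    rw [Set.eq_univ_of_forall h] at hbad
    exact hbad.false
  exact ⟨({v | ω v} : Finset V), by simpa [bad] using hω⟩

end Concentration

lemma eventually_rpow_mul_exp_lt_one (C : ℝ) {c : ℝ} (hc : 0 < c) :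
    ∀ᶠ n : ℕ in atTop,
      (n : ℝ) ^ C * (2 * exp (-(c * (n : ℝ) ^ ((2 : ℝ) / 3)) ^ 2 / (2 * n))) < 1 := by
  -- in terms of `y = n^{1/3}` the quantity is `2 y^{3C} exp(-c² y / 2)`
  have hlim : Tendsto (fun y : ℝ ↦ 2 * (y ^ (3 * C) * exp (-(c ^ 2 / 2) * y))) atTop (𝓝 0) := by
    simpa using (tendsto_rpow_mul_exp_neg_mul_atTop_nhds_zero (3 * C) _ (by positivity)).const_mul 2
  have hcube : Tendsto (fun n : ℕ ↦ (n : ℝ) ^ ((1 : ℝ) / 3)) atTop atTop :=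
    (tendsto_rpow_atTop (by norm_num)).comp tendsto_natCast_atTop_atTop
  refine (hlim.comp hcube).eventually (gt_mem_nhds one_pos) |>.congr ?_
  filter_upwards [eventually_gt_atTop 0] with n hn
  set y := (n : ℝ) ^ ((1 : ℝ) / 3)
  have hy : 0 < y := by positivity
  have hpow (k : ℕ) : (n : ℝ) ^ ((k : ℝ) / 3) = y ^ k := by
    rw [← rpow_natCast, ← rpow_mul (Nat.cast_nonneg n)]; ring_nf
  have hn' : (n : ℝ) = y ^ 3 := by simpa using hpow 3
  have hC : (n : ℝ) ^ C = y ^ (3 * C) := by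
    rw [rpow_mul hy.le, hn']
    norm_cast
  have hsq : (n : ℝ) ^ ((2 : ℝ) / 3) = y ^ 2 := by exact_mod_cast hpow 2
  simp only [Function.comp_apply]
  have hexp : (c * y ^ 2) ^ 2 / (2 * n) = c ^ 2 / 2 * y := by rw [hn']; field_simp
  rw [hC, hsq, neg_div, hexp, neg_mul, mul_left_comm]

section Graph

variable {V : Type*} [Fintype V] [DecidableEq V] {G : Finset (Finset V)}

def neighbors (G : Finset (Finset V)) (v : V) : Finset V := {u | {v, u} ∈ G}

@[simp] lemma mem_neighbors {v u : V} : u ∈ neighbors G v ↔ {v, u} ∈ G := by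
  simp [neighbors]

lemma card_neighbors_inter_eq (hG : ∀ e ∈ G, #e = 2) {R : Finset V}
    {v : V} (hv : v ∈ R) : #(neighbors G v ∩ R) = #{e ∈ G | e ⊆ R ∧ v ∈ e} := by
  refine card_bij (fun u _ ↦ {v, u}) (fun u hu ↦ ?_) (fun u hu u' _ huu' ↦ ?_)
    (fun e he ↦ ?_)
  · simp only [mem_inter, mem_neighbors] at hu
    simp [hu.1, insert_subset_iff, hv, hu.2]
  · simp only [mem_inter, mem_neighbors] at hu
    have hvu : v ≠ u := by
      rintro rfl
      simpa using hG _ hu.1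
    have : u ∈ ({v, u'} : Finset V) := by simp [← huu']
    simpa [hvu.symm] using this
  · simp only [mem_filter] at he
    obtain ⟨heG, heR, hve⟩ := he
    obtain ⟨x, y, -, rfl⟩ := card_eq_two.mp (hG _ heG)
    rcases mem_insert.mp hve with rfl | hvy
    · exact ⟨y, by simp [heG, heR (mem_insert_of_mem (mem_singleton_self y))], rfl⟩
    · obtain rfl := mem_singleton.mp hvy
      rw [pair_comm] at heG heR ⊢
      exact ⟨x, by simp [heG, heR (mem_insert_of_mem (mem_singleton_self x))], rfl⟩

lemma sum_card_neighbors_inter (hG : ∀ e ∈ G, #e = 2) (R : Finset V) :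
    ∑ v ∈ R, #(neighbors G v ∩ R) = 2 * #{e ∈ G | e ⊆ R} := by
  rw [sum_congr rfl fun v hv ↦ card_neighbors_inter_eq hG hv]
  have := sum_card_bipartiteAbove_eq_sum_card_bipartiteBelow (s := R) (t := {e ∈ G | e ⊆ R})
    (r := fun v e ↦ v ∈ e)
  simp only [bipartiteAbove, bipartiteBelow, filter_filter] at this
  rw [this, sum_const_nat fun e he ↦ ?_, mul_comm]
  rw [mem_filter] at he
  rw [filter_mem_eq_inter, inter_eq_right.mpr he.2, hG e he.1]

lemma sum_card_neighbors (R : Finset V) :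
    ∑ v ∈ R, #(neighbors G v) = ∑ u, #(neighbors G u ∩ R) := by
  have hinter (u : V) : neighbors G u ∩ R = {v ∈ R | {u, v} ∈ G} := by
    ext v; simp [and_comm]
  simp only [hinter, card_filter]
  simp only [neighbors, card_filter]
  rw [sum_comm]
  simp_rw [pair_comm]

lemma sub_le_card_filter_subset (hG : ∀ e ∈ G, #e = 2) (R : Finset V)
    {p ε : ℝ} (hp : 0 ≤ p) (hR : ∀ u, p * #(neighbors G u) - ε ≤ #(neighbors G u ∩ R)) :
    p ^ 2 * #G - (p * ε * Fintype.card V + ε * #R) / 2 ≤ #{e ∈ G | e ⊆ R} := by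
  have hedges : ∑ v ∈ R, (#(neighbors G v ∩ R) : ℝ) = 2 * #{e ∈ G | e ⊆ R} := by
    exact_mod_cast sum_card_neighbors_inter hG R
  have hhandshake : ∑ v, (#(neighbors G v) : ℝ) = 2 * #G := by
    simpa using congrArg (Nat.cast (R := ℝ)) (sum_card_neighbors_inter hG univ)
  have hswap : ∑ v ∈ R, (#(neighbors G v) : ℝ) = ∑ u, (#(neighbors G u ∩ R) : ℝ) := by
    exact_mod_cast sum_card_neighbors R
  have hinR := sum_le_sum fun v (_ : v ∈ R) ↦ hR v
  have hall := mul_le_mul_of_nonneg_left (sum_le_sum fun v (_ : v ∈ univ) ↦ hR v) hp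
  simp only [sum_sub_distrib, ← mul_sum, sum_const, nsmul_eq_mul, card_univ] at hinR hall
  rw [hedges, hswap] at hinR
  rw [hhandshake] at hall
  linarith

end Graph

lemma sub_two_mul_mul_le_of_concentration {p δ n ε r u α : ℝ} (hp0 : 0 ≤ p) (hp1 : p ≤ 1)
    (hδ : 0 ≤ δ) (hn : 0 ≤ n) (hε : ε = p ^ 2 / 8 * δ * n) (hα : α ≤ 1) (hr0 : 0 ≤ r)
    (hu0 : 0 ≤ u) (hr : r ≤ p * n + ε) (hu : p * (α * n) - ε ≤ u) :
    (α - 2 * δ) * r ≤ u := by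
  have hε0 : 0 ≤ ε := by rw [hε]; positivity
  have hεδ : ε ≤ δ * (p * n) := by rw [hε]; nlinarith [mul_nonneg hδ hn]
  rcases le_or_gt α (2 * δ) with hα2 | hα2
  · nlinarith
  · nlinarith

lemma sub_three_mul_mul_le_of_concentration {p δ n ε r g e β : ℝ}
    (hp0 : 0 < p) (hp1 : p ≤ 1) (hδ0 : 0 < δ) (hδ1 : δ ≤ 1) (hε : ε = p ^ 2 / 8 * δ * n)
    (hpn : 8 ≤ p * n) (hδn : 1 ≤ δ * n) (hβ0 : 0 ≤ β) (hβ1 : β ≤ 1)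
    (hr : |r - p * n| ≤ ε) (hg : β * (n * (n - 1) / 2) ≤ g)
    (he : p ^ 2 * g - (p * ε * n + ε * r) / 2 ≤ e) :
    (β - 3 * δ) * (r * (r - 1) / 2) ≤ e := by
  obtain ⟨hr1, hr2⟩ := abs_le.mp hr
  have hn0 : 0 < n := by nlinarith
  have hε0 : 0 ≤ ε := by rw [hε]; positivity
  have hεpn : ε ≤ p * n / 8 := by
    rw [hε]; nlinarith [mul_pos hp0 hn0, mul_le_mul hp1 hδ1 hδ0.le zero_le_one]
  have hr7 : 7 / 8 * (p * n) ≤ r := by linarith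
  have hr3 : 3 / 4 * (p * n) ≤ r - 1 := by linarith
  have hslack : 63 / 64 * (δ * (p * n) ^ 2) ≤ 3 * δ * (r * (r - 1) / 2) := by
    nlinarith [mul_le_mul hr7 hr3 (by positivity) (by linarith)]
  have hβr : β * (r * (r - 1) / 2) ≤ β * (p * n) ^ 2 / 2 + p * n * ε + ε ^ 2 / 2 := by
    have hsq : r * r ≤ (p * n + ε) * (p * n + ε) :=
      mul_self_le_mul_self (by linarith) (by linarith)
    nlinarith [mul_le_mul_of_nonneg_left hsq hβ0, mul_nonneg hβ0 (by linarith : 0 ≤ r),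
      mul_nonneg (sub_nonneg.mpr hβ1) (mul_nonneg (by linarith : 0 ≤ p * n) hε0),
      mul_nonneg (sub_nonneg.mpr hβ1) (sq_nonneg ε)]
  have hβg : p ^ 2 * (β * (n * (n - 1) / 2)) ≤ p ^ 2 * g := by gcongr
  have herr : 2 * (p * n) * ε + ε ^ 2 + p ^ 2 * β * n / 2 ≤ 63 / 64 * (δ * (p * n) ^ 2) := by
    have hX : 0 ≤ δ * (p * n) ^ 2 := by positivity
    have h1 : 2 * (p * n) * ε = p * (δ * (p * n) ^ 2) / 4 := by rw [hε]; ring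
    have h2 : ε ^ 2 = p ^ 2 * δ * (δ * (p * n) ^ 2) / 64 := by rw [hε]; ring
    have hp2δ : p ^ 2 * δ ≤ 1 := by nlinarith [mul_le_mul hp1 hp1 hp0.le zero_le_one]
    have h3 : p ^ 2 * β * n ≤ δ * (p * n) ^ 2 := by
      nlinarith [mul_le_mul_of_nonneg_left hδn (by positivity : 0 ≤ p ^ 2 * n),
        mul_le_mul_of_nonneg_left hβ1 (by positivity : 0 ≤ p ^ 2 * n)]
    nlinarith [mul_le_mul_of_nonneg_right hp1 hX, mul_le_mul_of_nonneg_right hp2δ hX]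
  nlinarith

lemma add_mul_add_one_le_rpow_add_two {n : ℕ} (hn : 2 ≤ n) {C s t : ℝ} (hC : 0 ≤ C)
    (hs : s ≤ (n : ℝ) ^ C) (ht : t ≤ (n : ℝ) ^ C) :
    s + t * n + 1 ≤ (n : ℝ) ^ (C + 2) := by
  have hn' : (2 : ℝ) ≤ n := by exact_mod_cast hn
  have h1 : 1 ≤ (n : ℝ) ^ C := Real.one_le_rpow (by linarith) hC
  rw [Real.rpow_add (by linarith), Real.rpow_two]
  have htn : t * n ≤ (n : ℝ) ^ C * n := mul_le_mul_of_nonneg_right ht (by positivity)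
  have hsq : (n : ℝ) ^ C * (n + 2) ≤ (n : ℝ) ^ C * n ^ 2 := by gcongr; nlinarith
  nlinarith

def testSets {n s t : ℕ} (U : Fin s → Finset (Fin n)) (G : Fin t → Finset (Finset (Fin n))) :
    Option (Fin s ⊕ Fin t × Fin n) → Finset (Fin n) :=
  fun l ↦ l.elim univ (Sum.elim U fun q ↦ neighbors (G q.1) q.2)

lemma reservoir_of_forall_abs_card_inter_sub_lt {n s t : ℕ} {p : ℝ} (hp0 : 0 < p) (hp1 : p ≤ 1)
    (hpn : 8 ≤ p * n) {U : Fin s → Finset (Fin n)} {G : Fin t → Finset (Finset (Fin n))}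
    {α : Fin s → ℝ} {β : Fin t → ℝ} (hG : ∀ j, ∀ e ∈ G j, #e = 2) (hα : ∀ i, α i ≤ 1)
    (hβ : ∀ j, 0 ≤ β j ∧ β j ≤ 1) (hU : ∀ i, α i * n ≤ #(U i))
    (hGc : ∀ j, β j * (n.choose 2 : ℝ) ≤ #(G j)) {R : Finset (Fin n)}
    (hR : ∀ l, |(#(testSets U G l ∩ R) : ℝ) - p * #(testSets U G l)| <
      p ^ 2 / 8 * (n : ℝ) ^ ((2 : ℝ) / 3)) :
    |(#R : ℝ) - p * n| ≤ p * (n : ℝ) ^ ((2 : ℝ) / 3) ∧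
      (∀ i, (α i - 2 * (n : ℝ) ^ (-(1 : ℝ) / 3)) * #R ≤ #(U i ∩ R)) ∧
      (∀ j, (β j - 3 * (n : ℝ) ^ (-(1 : ℝ) / 3)) * ((#R).choose 2 : ℝ) ≤
        #{e ∈ G j | e ⊆ R}) := by
  have hn1 : (1 : ℝ) ≤ n := by nlinarith
  set δ : ℝ := (n : ℝ) ^ (-(1 : ℝ) / 3)
  have hδ0 : 0 < δ := by positivity
  have hδ1 : δ ≤ 1 := rpow_le_one_of_one_le_of_nonpos hn1 (by norm_num)
  have hδn : δ * n = (n : ℝ) ^ ((2 : ℝ) / 3) := by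
    rw [show (2 : ℝ) / 3 = -1 / 3 + 1 by norm_num, rpow_add (by positivity), rpow_one]
  set ε := p ^ 2 / 8 * δ * n with hε
  rw [← hδn, ← mul_assoc] at hR
  have hRcard : |(#R : ℝ) - p * n| ≤ ε := by simpa [testSets] using (hR none).le
  refine ⟨hRcard.trans ?_, fun i ↦ ?_, fun j ↦ ?_⟩
  · rw [← hδn, hε]
    nlinarith [mul_pos (mul_pos hp0 hδ0) (by positivity : (0 : ℝ) < n)]
  · have hUi := (abs_lt.mp (hR (some (.inl i)))).1
    simp only [testSets, Option.elim_some, Sum.elim_inl] at hUi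
    exact sub_two_mul_mul_le_of_concentration hp0.le hp1 hδ0.le (by positivity) hε (hα i)
      (by positivity) (by positivity) (by linarith [(abs_le.mp hRcard).2])
      (by linarith [mul_le_mul_of_nonneg_left (hU i) hp0.le])
  · have hnbhd (u : Fin n) : p * #(neighbors (G j) u) - ε ≤ #(neighbors (G j) u ∩ R) := by
      have := (abs_lt.mp (hR (some (.inr (j, u))))).1
      simp only [testSets, Option.elim_some, Sum.elim_inr] at this
      linarith
    have hedges := sub_le_card_filter_subset (hG j) R hp0.le hnbhd
    rw [Fintype.card_fin] at hedges
    rw [Nat.cast_choose_two] at hGc ⊢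
    exact sub_three_mul_mul_le_of_concentration hp0 hp1 hδ0 hδ1 hε hpn (hδn ▸ one_le_rpow hn1
      (by norm_num)) (hβ j).1 (hβ j).2 hRcard (hGc j) hedges

/-- existence of a reservoir set `R` inheriting proportions of
given large vertex subsets and dense graphs. -/
theorem stmt_3 (p C : ℝ) (hp0 : 0 < p) (hp1 : p < 1) (hC : 0 < C) :
    ∃ n₀ : ℕ, ∀ n : ℕ, n₀ ≤ n → ∀ s t : ℕ,
      (s : ℝ) ≤ (n : ℝ) ^ C → (t : ℝ) ≤ (n : ℝ) ^ C →
      ∀ (U : Fin s → Finset (Fin n)) (G : Fin t → Finset (Finset (Fin n)))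
        (α : Fin s → ℝ) (β : Fin t → ℝ),
        (∀ j : Fin t, ∀ e ∈ G j, e.card = 2) →
        (∀ i, 0 < α i ∧ α i < 1) →
        (∀ j, 0 < β j ∧ β j < 1) →
        (∀ i, α i * n ≤ ((U i).card : ℝ)) →
        (∀ j, β j * (n.choose 2 : ℝ) ≤ ((G j).card : ℝ)) →
        ∃ R : Finset (Fin n),
          |(R.card : ℝ) - p * n| ≤ p * (n : ℝ) ^ ((2 : ℝ)/3) ∧
          (∀ i, (α i - 2 * (n : ℝ) ^ (-(1 : ℝ)/3)) * R.card ≤ ((U i ∩ R).card : ℝ)) ∧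
          (∀ j, (β j - 3 * (n : ℝ) ^ (-(1 : ℝ)/3)) * (R.card.choose 2 : ℝ) ≤
            (((G j).filter fun e => e ⊆ R).card : ℝ)) := by
  obtain ⟨n₀, hn₀⟩ := eventually_atTop.mp
    ((eventually_rpow_mul_exp_lt_one (C + 2) (c := p ^ 2 / 8) (by positivity)).and
      ((eventually_ge_atTop 2).and (eventually_ge_atTop ⌈8 / p⌉₊)))
  refine ⟨n₀, fun n hn s t hs ht U G α β hG hα hβ hU hGc ↦ ?_⟩
  obtain ⟨hsmall, hn2, hpn⟩ := hn₀ n hn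
  have hpn8 : 8 ≤ p * n := by
    have := (Nat.le_ceil (8 / p)).trans (Nat.cast_le.mpr hpn)
    rwa [div_le_iff₀ hp0, mul_comm] at this
  obtain ⟨R, hR⟩ := exists_forall_abs_card_inter_sub_lt hp0.le hp1.le (testSets U G)
    (ε := p ^ 2 / 8 * (n : ℝ) ^ ((2 : ℝ) / 3)) (by positivity) <| by
      refine lt_of_le_of_lt (mul_le_mul_of_nonneg_right ?_ (by positivity)) (by simpa using hsmall)
      simpa using add_mul_add_one_le_rpow_add_two hn2 hC.le hs ht
  exact ⟨R, reservoir_of_forall_abs_card_inter_sub_lt hp0 hp1.le hpn8 hG (fun i ↦ (hα i).2.le)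
    (fun j ↦ ⟨(hβ j).1.le, (hβ j).2.le⟩) hU hGc hR⟩
end

section
/- For all s, t ∈ ℕ and α ∈ (0,1) the following holds for sufficiently large n. Let m ≤ n^s and let A₁,…,A_m ⊂ [n]^t be families of t-tuples of elements of [n] with |A_i| ≥ 4α·t²·n^t for every i ∈ [m]. Then there exists a family F ⊂ A₁ ∪ ⋯ ∪ A_m of t-tuples such that |F| ≤ αn, any two distinct t-tuples in F are disjoint (no element of [n] occurs in both), and |F ∩ A_i| ≥ α²·t²·n/4 for every i ∈ [m]. -/
/-!
Choose `K = ⌊αn⌋` tuples one after another, each injective and disjoint from the earlier ones.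
The density hypothesis forces `4αt² ≤ 1`, so at most `Kt ≤ n/4` points are ever used and at every
step at least a fraction `1 - αt²` of all tuples is still available; by the density of `A_i`, at
least a fraction `2αt²` of the available ones lies in `A_i`. Averaging over all such sequences, the
exponential moment `2 ^ (misses of A_i)` is therefore at most `(2(1 - αt²))^K ≤ 2^K e^{-αt²K}`.
Summing over the `m ≤ n^s` families gives a sequence that hits every `A_i` at least
`αt²K - s log n` times, and this exceeds `α²t²n/4` for large `n` because `log n = o(n)`.
-/

open Finset Function

lemma two_mul_card_le_card_inter {X : Type*} [Fintype X] [DecidableEq X] {s u : Finset X}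
    {q : ℝ} (hq : 0 ≤ q) (hs : 4 * q * Fintype.card X ≤ #s)
    (hu : (1 - q) * Fintype.card X ≤ #u) : 2 * q * #u ≤ #(u ∩ s) := by
  have hunion : #(u ∪ s) + #(u ∩ s) = #u + #s := card_union_add_card_inter u s
  have hunion_le : (#(u ∪ s) : ℝ) ≤ Fintype.card X := by exact_mod_cast card_le_univ _
  have hu_le : (#u : ℝ) ≤ Fintype.card X := by exact_mod_cast card_le_univ _
  have : (#(u ∪ s) : ℝ) + #(u ∩ s) = #u + #s := by exact_mod_cast hunion
  nlinarith

lemma one_sub_mul_mul_pow_le_descFactorial {n t j : ℕ} {δ : ℝ} (hδ : δ ≤ 1)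
    (hj : (j + t : ℝ) ≤ δ * n) : (1 - t * δ) * (n : ℝ) ^ t ≤ (n - j).descFactorial t := by
  have hjt : j + t ≤ n := by
    have : (j + t : ℝ) ≤ n := hj.trans (by nlinarith [(n.cast_nonneg : (0 : ℝ) ≤ n)])
    exact_mod_cast this
  have hsub : (1 - δ) * n ≤ ((n - j - t : ℕ) : ℝ) := by
    rw [Nat.cast_sub (by omega), Nat.cast_sub (by omega)]; linarith
  calc (1 - t * δ) * (n : ℝ) ^ t ≤ (1 - δ) ^ t * n ^ t := by
        gcongr
        simpa [sub_eq_add_neg, mul_neg] using one_add_mul_le_pow (a := -δ) (by linarith) t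
    _ = ((1 - δ) * n) ^ t := (mul_pow _ _ _).symm
    _ ≤ ((n - j - t : ℕ) : ℝ) ^ t := by gcongr
    _ ≤ (n - j).descFactorial t := by
        exact_mod_cast (Nat.pow_le_pow_left (by omega) t).trans (Nat.pow_sub_le_descFactorial _ _)

lemma mul_sub_log_le_of_two_pow_le {a b K : ℕ} (hab : a + b = K) {q N : ℝ} (hq : q < 1)
    (hN : 0 < N) (h : (2 : ℝ) ^ b ≤ N * (2 * (1 - q)) ^ K) : q * K - Real.log N ≤ a := by
  have hq' : 0 < 1 - q := by linarith
  have hlog := Real.log_le_log (by positivity) h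
  rw [Real.log_mul hN.ne' (by positivity), Real.log_pow, Real.log_pow,
    Real.log_mul two_ne_zero hq'.ne'] at hlog
  have h1 : Real.log (1 - q) ≤ -q := by linarith [Real.log_le_sub_one_of_pos hq']
  have h2 : (K : ℝ) * Real.log (1 - q) ≤ K * -q := mul_le_mul_of_nonneg_left h1 K.cast_nonneg
  have h3 : (a : ℝ) * Real.log 2 ≤ a :=
    mul_le_of_le_one_right a.cast_nonneg (by linarith [Real.log_two_lt_d9])
  have hK : (K : ℝ) * Real.log 2 = a * Real.log 2 + b * Real.log 2 := by
    rw [← hab, Nat.cast_add, add_mul]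
  rw [mul_add] at hlog
  linarith

lemma eventually_le_mul_floor (s t : ℕ) (ht : 0 < t) {α : ℝ} (hα : 0 < α) :
    ∀ᶠ n : ℕ in Filter.atTop,
      α ^ 2 * t ^ 2 * n / 4 + s * Real.log n ≤ α * t ^ 2 * ⌊α * n⌋₊ := by
  have hc : 0 < 3 / 4 * (α ^ 2 * t ^ 2) := by positivity
  have hlittle := ((Real.isLittleO_log_id_atTop.const_mul_left (s : ℝ)).add
    (Asymptotics.isLittleO_const_id_atTop (α * t ^ 2))).bound hc
  filter_upwards [tendsto_natCast_atTop_atTop.eventually hlittle] with n hn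
  have hfloor : α * n - 1 ≤ ⌊α * n⌋₊ := by linarith [Nat.lt_floor_add_one (α * n)]
  have := mul_le_mul_of_nonneg_left hfloor (by positivity : 0 ≤ α * t ^ 2)
  simp only [Real.norm_eq_abs, id, Nat.abs_cast] at hn
  nlinarith [le_abs_self (s * Real.log n + α * t ^ 2)]

namespace TuplePacking

variable {V : Type*} {t k : ℕ}

lemma injective_uncurry_cons {x : Fin t → V} {g : Fin k → Fin t → V} :
    Injective (uncurry (Fin.cons x g : Fin (k + 1) → Fin t → V)) ↔
      Injective (uncurry g) ∧ Injective x ∧ ∀ p j q, x p ≠ g j q := by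
  constructor
  · intro h
    refine ⟨fun a b hab => ?_, fun p q hpq => ?_, fun p j q hpq => ?_⟩
    · have := @h (a.1.succ, a.2) (b.1.succ, b.2) (by simpa [uncurry] using hab)
      exact Prod.ext_iff.2 (by simpa using this)
    · simpa using @h (0, p) (0, q) (by simpa using hpq)
    · exact j.succ_ne_zero (Prod.ext_iff.1 (@h (0, p) (j.succ, q) (by simpa using hpq))).1.symm
  · rintro ⟨hg, hx, hxg⟩ ⟨a, p⟩ ⟨b, q⟩ h
    cases a using Fin.cases <;> cases b using Fin.cases
    · simpa using hx h
    · exact absurd h (by simpa using hxg _ _ _)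
    · exact absurd h.symm (by simpa using hxg _ _ _)
    · simpa using @hg (_, p) (_, q) (by simpa using h)

variable [Fintype V] [DecidableEq V]

-- Tuples are taken injective so that the number of extensions of a packing depends only on its
-- length (`card_extensions`).
variable (V t k) in
def packings : Finset (Fin k → Fin t → V) :=
  univ.filter fun g => Injective (uncurry g)

def extensions (g : Fin k → Fin t → V) : Finset (Fin t → V) :=
  univ.filter fun x => Injective x ∧ ∀ p j q, x p ≠ g j q

lemma sum_packings_succ {M : Type*} [AddCommMonoid M] (f : (Fin (k + 1) → Fin t → V) → M) :
    ∑ g ∈ packings V t (k + 1), f g =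
      ∑ g ∈ packings V t k, ∑ x ∈ extensions g, f (Fin.cons x g) := by
  simp only [packings, sum_filter]
  rw [← (Fin.consEquiv fun _ => Fin t → V).sum_comp, Fintype.sum_prod_type, sum_comm]
  refine sum_congr rfl fun g _ => ?_
  simp [Fin.consEquiv, extensions, injective_uncurry_cons, sum_filter, ite_and]

lemma card_extensions {g : Fin k → Fin t → V} (hg : g ∈ packings V t k) :
    #(extensions g) = (Fintype.card V - k * t).descFactorial t := by
  set U := (univ.image (uncurry g))ᶜ
  have hU : #U = Fintype.card V - k * t := by
    rw [card_compl, card_image_of_injective _ (mem_filter.1 hg).2]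
    simp
  have hmem : ∀ v, v ∈ U ↔ ∀ j q, g j q ≠ v := by simp [U]
  let e : extensions g ≃ (Fin t ↪ U) :=
    { toFun x := ⟨fun p => ⟨x.1 p, (hmem _).2 fun j q h => ((mem_filter.1 x.2).2.2 p j q h.symm)⟩,
        fun p q h => (mem_filter.1 x.2).2.1 (congrArg Subtype.val h)⟩
      invFun f := ⟨fun p => f p, mem_filter.2 ⟨mem_univ _, fun p q h => f.injective (Subtype.ext h),
        fun p j q h => (hmem _).1 (f p).2 j q h.symm⟩⟩
      left_inv _ := rfl
      right_inv _ := rfl }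
  rw [card_eq_of_equiv_fintype e, Fintype.card_embedding_eq, Fintype.card_coe, hU,
    Fintype.card_fin]

lemma card_packings_succ :
    #(packings V t (k + 1)) = (Fintype.card V - k * t).descFactorial t * #(packings V t k) := by
  rw [card_eq_sum_ones, sum_packings_succ, card_eq_sum_ones, mul_sum]
  refine sum_congr rfl fun g hg => ?_
  rw [← card_eq_sum_ones, card_extensions hg, mul_one]

lemma packings_nonempty (h : k * t ≤ Fintype.card V) : (packings V t k).Nonempty := by
  obtain ⟨e⟩ := Function.Embedding.nonempty_of_card_le (α := Fin k × Fin t) (β := V) (by simpa)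
  exact ⟨curry e, by simp [packings, e.injective]⟩

lemma sum_prod_packings_le (w : (Fin t → V) → ℝ) (hw : ∀ x, 0 ≤ w x) {r : ℝ} (hr : 0 ≤ r)
    {K : ℕ} (h : ∀ k < K, ∀ g ∈ packings V t k, ∑ x ∈ extensions g, w x ≤ r * #(extensions g)) :
    ∑ g ∈ packings V t K, ∏ j, w (g j) ≤ r ^ K * #(packings V t K) := by
  induction K with
  | zero => simp [packings]
  | succ K ih =>
    set E : ℝ := ↑((Fintype.card V - K * t).descFactorial t)
    calc ∑ g ∈ packings V t (K + 1), ∏ j, w (g j)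
        = ∑ g ∈ packings V t K, (∏ j, w (g j)) * ∑ x ∈ extensions g, w x := by
          simp [sum_packings_succ, Fin.prod_univ_succ, mul_sum, mul_comm]
      _ ≤ ∑ g ∈ packings V t K, (∏ j, w (g j)) * (r * E) := by
          refine sum_le_sum fun g hg => mul_le_mul_of_nonneg_left ?_ (prod_nonneg fun j _ => hw _)
          simpa [E, card_extensions hg] using h K K.lt_succ_self g hg
      _ = r * E * ∑ g ∈ packings V t K, ∏ j, w (g j) := by rw [← sum_mul, mul_comm]
      _ ≤ r * E * (r ^ K * #(packings V t K)) :=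
          mul_le_mul_of_nonneg_left (ih fun k hk => h k (by omega)) (by positivity)
      _ = r ^ (K + 1) * #(packings V t (K + 1)) := by
          rw [card_packings_succ]; push_cast; ring

lemma exists_packing_sum_two_pow_le {ι : Type*} [Fintype ι] (A : ι → Finset (Fin t → V)) {q : ℝ}
    (hq : q ≤ 1) {K : ℕ} (hK : K * t ≤ Fintype.card V)
    (hA : ∀ i, ∀ k < K, ∀ g ∈ packings V t k, 2 * q * #(extensions g) ≤ #(extensions g ∩ A i)) :
    ∃ g ∈ packings V t K,
      ∑ i, (2 : ℝ) ^ #{j | g j ∉ A i} ≤ Fintype.card ι * (2 * (1 - q)) ^ K := by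
  have hpow (B : Finset (Fin t → V)) (g : Fin K → Fin t → V) :
      (2 : ℝ) ^ #{j | g j ∉ B} = ∏ j, if g j ∈ B then 1 else 2 := by
    rw [prod_ite, prod_const_one, prod_const, one_mul]
  have hsum (i : ι) :
      ∑ g ∈ packings V t K, (2 : ℝ) ^ #{j | g j ∉ A i} ≤
        (2 * (1 - q)) ^ K * #(packings V t K) := by
    simp only [hpow]
    refine sum_prod_packings_le (fun x => if x ∈ A i then 1 else 2)
      (fun x => by split_ifs <;> norm_num) (by linarith) fun k hk g hg => ?_
    have hsplit := card_filter_add_card_filter_not (s := extensions g) (· ∈ A i)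
    rw [filter_mem_eq_inter] at hsplit
    have hsplit' : (#(extensions g ∩ A i) : ℝ) + #{x ∈ extensions g | x ∉ A i} =
        #(extensions g) := by exact_mod_cast hsplit
    rw [sum_ite, sum_const, sum_const, filter_mem_eq_inter, nsmul_eq_mul, nsmul_eq_mul]
    linarith [hA i k hk g hg]
  refine exists_le_of_sum_le (packings_nonempty hK) ?_
  calc ∑ g ∈ packings V t K, ∑ i, (2 : ℝ) ^ #{j | g j ∉ A i}
      = ∑ i, ∑ g ∈ packings V t K, (2 : ℝ) ^ #{j | g j ∉ A i} := sum_comm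
    _ ≤ ∑ _i : ι, (2 * (1 - q)) ^ K * #(packings V t K) := sum_le_sum fun i _ => hsum i
    _ = ∑ _g ∈ packings V t K, Fintype.card ι * (2 * (1 - q)) ^ K := by
      simp only [sum_const, card_univ, nsmul_eq_mul]; ring

lemma exists_subfamily_of_mem_packings {ι : Type*} [Fintype ι] (A : ι → Finset (Fin t → V))
    (ht : 0 < t) {K : ℕ} {g : Fin K → Fin t → V} (hg : g ∈ packings V t K) :
    ∃ F ⊆ univ.biUnion A, #F ≤ K ∧ (∀ f ∈ F, ∀ f' ∈ F, f ≠ f' → ∀ p q, f p ≠ f' q) ∧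
      ∀ i, #{j | g j ∈ A i} ≤ #(F ∩ A i) := by
  have hinj : Injective (uncurry g) := (mem_filter.1 hg).2
  have hg_inj : Injective g := fun j j' h =>
    congrArg Prod.fst (@hinj (j, ⟨0, ht⟩) (j', ⟨0, ht⟩) (congrFun h _))
  refine ⟨univ.image g ∩ univ.biUnion A, inter_subset_right, ?_, ?_, fun i => ?_⟩
  · exact (card_le_card inter_subset_left).trans (card_image_le.trans (by simp))
  · simp only [mem_inter, mem_image, mem_univ, true_and]
    rintro _ ⟨⟨j, rfl⟩, -⟩ _ ⟨⟨j', rfl⟩, -⟩ hne p q h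
    exact hne (congrArg g (congrArg Prod.fst (@hinj (j, p) (j', q) h)))
  · rw [← card_image_of_injective _ hg_inj]
    refine card_le_card fun x hx => ?_
    obtain ⟨j, hj, rfl⟩ := mem_image.1 hx
    have hj : g j ∈ A i := (mem_filter.1 hj).2
    simp only [mem_inter, mem_image, mem_univ, true_and, mem_biUnion]
    exact ⟨⟨⟨j, rfl⟩, i, hj⟩, hj⟩

theorem exists_disjoint_hitting_subfamily {ι : Type*} [Fintype ι] (A : ι → Finset (Fin t → V))
    (ht : 0 < t) {α : ℝ} (hα : 0 < α) (hq : 4 * (α * t ^ 2) ≤ 1)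
    (hA : ∀ i, 4 * (α * t ^ 2) * Fintype.card V ^ t ≤ #(A i)) :
    ∃ F ⊆ univ.biUnion A, #F ≤ α * Fintype.card V ∧
      (∀ f ∈ F, ∀ f' ∈ F, f ≠ f' → ∀ p q, f p ≠ f' q) ∧
      ∀ i, α * t ^ 2 * ⌊α * Fintype.card V⌋₊ - Real.log (Fintype.card ι) ≤ #(F ∩ A i) := by
  set n := Fintype.card V
  set q := α * t ^ 2
  set K := ⌊α * n⌋₊
  have hK : (K : ℝ) ≤ α * n := Nat.floor_le (by positivity)
  have ht1 : (1 : ℝ) ≤ t := by exact_mod_cast ht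
  have hαt : α * t ≤ 1 / 4 := by nlinarith
  have hKt : (K * t : ℝ) ≤ α * t * n := by nlinarith
  have hKt' : K * t ≤ n := by
    have : (K * t : ℝ) ≤ n := hKt.trans (by nlinarith [(n.cast_nonneg : (0 : ℝ) ≤ n)])
    exact_mod_cast this
  have hext (k : ℕ) (hk : k < K) (g : Fin k → Fin t → V) (hg : g ∈ packings V t k) :
      (1 - q) * n ^ t ≤ #(extensions g) := by
    have hk' : ((k + 1 : ℕ) : ℝ) ≤ K := by exact_mod_cast hk
    push_cast at hk'
    have := one_sub_mul_mul_pow_le_descFactorial (n := n) (j := k * t) (t := t) (δ := α * t)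
      (by linarith) (by push_cast; nlinarith)
    rw [card_extensions hg]
    convert this using 2
    ring
  obtain ⟨g, hg, hsum⟩ := exists_packing_sum_two_pow_le A (q := q) (by linarith) hKt'
    fun i k hk g hg => two_mul_card_le_card_inter (by positivity)
      (by simpa [Fintype.card_pi] using hA i) (by simpa [Fintype.card_pi] using hext k hk g hg)
  obtain ⟨F, hFA, hFcard, hFdisj, hFhits⟩ := exists_subfamily_of_mem_packings A ht hg
  refine ⟨F, hFA, (Nat.cast_le.2 hFcard).trans hK, hFdisj, fun i => ?_⟩
  have hmiss : (2 : ℝ) ^ #{j | g j ∉ A i} ≤ Fintype.card ι * (2 * (1 - q)) ^ K :=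
    (single_le_sum (fun i _ => by positivity) (mem_univ i)).trans hsum
  have hsplit : #{j | g j ∈ A i} + #{j | g j ∉ A i} = K := by
    simpa using card_filter_add_card_filter_not (s := univ) (fun j => g j ∈ A i)
  calc q * K - Real.log (Fintype.card ι) ≤ #{j | g j ∈ A i} :=
        mul_sub_log_le_of_two_pow_le hsplit (by linarith)
          (by exact_mod_cast Fintype.card_pos_iff.2 ⟨i⟩) hmiss
    _ ≤ #(F ∩ A i) := by exact_mod_cast hFhits i

end TuplePacking

theorem stmt_4_general (s t : ℕ) (α : ℝ) (hα0 : 0 < α) :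
    ∃ n₀ : ℕ, ∀ n : ℕ, n₀ ≤ n → ∀ m : ℕ, m ≤ n ^ s →
      ∀ A : Fin m → Finset (Fin t → Fin n),
        (∀ i, 4 * α * (t : ℝ)^2 * (n : ℝ)^t ≤ ((A i).card : ℝ)) →
        ∃ F : Finset (Fin t → Fin n),
          F ⊆ Finset.univ.biUnion A ∧
          (F.card : ℝ) ≤ α * n ∧
          (∀ f ∈ F, ∀ g ∈ F, f ≠ g → ∀ i j : Fin t, f i ≠ g j) ∧
          (∀ i, α^2 * (t : ℝ)^2 * n / 4 ≤ ((F ∩ A i).card : ℝ)) := by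
  rcases Nat.eq_zero_or_pos t with rfl | ht
  · exact ⟨0, fun n _ m _ A _ =>
      ⟨∅, empty_subset _, by rw [card_empty, Nat.cast_zero]; positivity, by simp, by simp⟩⟩
  obtain ⟨n₀, hn₀⟩ := Filter.eventually_atTop.1
    ((eventually_le_mul_floor s t ht hα0).and (Filter.eventually_ge_atTop 1))
  refine ⟨n₀, fun n hn m hm A hA => ?_⟩
  obtain ⟨hfloor, hn1⟩ := hn₀ n hn
  rcases Nat.eq_zero_or_pos m with rfl | hm0
  · exact ⟨∅, empty_subset _, by rw [card_empty, Nat.cast_zero]; positivity, by simp,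
      fun i => i.elim0⟩
  have hq : 4 * (α * t ^ 2) ≤ 1 := by
    have hcard : ((A ⟨0, hm0⟩).card : ℝ) ≤ (n : ℝ) ^ t := by
      exact_mod_cast (card_le_univ _).trans_eq (by simp)
    have := (hA ⟨0, hm0⟩).trans hcard
    nlinarith [pow_pos (by exact_mod_cast hn1 : (0 : ℝ) < n) t]
  obtain ⟨F, hFA, hFcard, hFdisj, hFhits⟩ :=
    TuplePacking.exists_disjoint_hitting_subfamily A ht hα0 hq (by simpa [mul_assoc] using hA)
  refine ⟨F, hFA, by simpa using hFcard, hFdisj, fun i => ?_⟩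
  have hlog : Real.log m ≤ s * Real.log n := by
    rw [← Real.log_pow]
    exact Real.log_le_log (by exact_mod_cast hm0) (by exact_mod_cast hm)
  have := hFhits i
  simp only [Fintype.card_fin] at this
  linarith

/-- selection of a small family of pairwise disjoint `t`-tuples
hitting each given large family of `t`-tuples many times. -/
theorem stmt_4 (s t : ℕ) (α : ℝ) (hα0 : 0 < α) (hα1 : α < 1) :
    ∃ n₀ : ℕ, ∀ n : ℕ, n₀ ≤ n → ∀ m : ℕ, m ≤ n ^ s →
      ∀ A : Fin m → Finset (Fin t → Fin n),
        (∀ i, 4 * α * (t : ℝ)^2 * (n : ℝ)^t ≤ ((A i).card : ℝ)) →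
        ∃ F : Finset (Fin t → Fin n),
          F ⊆ Finset.univ.biUnion A ∧
          (F.card : ℝ) ≤ α * n ∧
          (∀ f ∈ F, ∀ g ∈ F, f ≠ g → ∀ i j : Fin t, f i ≠ g j) ∧
          (∀ i, α^2 * (t : ℝ)^2 * n / 4 ≤ ((F ∩ A i).card : ℝ)) :=
  stmt_4_general s t α hα0
end

section
/- For every integer k ≥ 3 and sufficiently small γ > 0 the following holds for all sufficiently large n. Let (H,φ) be a colored k-graph on an n-element vertex set V with δ_{k-1}(H) ≥ (1/2 + γ)n and Δ_{k-1}(H_i) ≤ cn for every color i, where c ≤ 4(γ/2)^k·(3k)^{−2}. Then for every vertex v ∈ V there are at least 4(γ/2)^k·n^{4k−4} properly colored v-absorbers in (H,φ). -/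
/-!
The absorber is built greedily, one vertex at a time, outward from `v`: first
`w_{2k-2}, …, w_1` to the left of `v`, then `w_{2k-1}, …, w_{4k-4}` to the right, keeping both
`T_v` and `T` properly coloured. A vertex `x` added next to the `k - 1` end vertices `S` of a path
must make `S ∪ {x}` an edge whose colour differs from the `k - 1` edges it meets; the codegree
condition and the bound on the colour classes leave at least `(1/2 + γ)n - k·cn` such `x`.
On the left, and in the last `k - 1` steps on the right, `T` and `T_v` share the end being
extended, so about `n/2` vertices are available. In the `k - 1` steps `w_{2k-1}, …, w_{3k-3}`
the two ends differ (one contains `v`), but two sets of size about `(1/2 + γ)n` still meet in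
about `γn` vertices. Distinct choice sequences give distinct absorbers, hence at least
`(γn)^{k-1} (n/2)^{3k-3} ≥ 4 (γ/2)^k n^{4k-4}` of them once `γ ≤ 4^{-k}`.
-/

open Finset

/-- The degree of a vertex set `S` in a hypergraph `H`:
the number of edges of `H` containing `S`. -/
def hypDeg {V : Type} [DecidableEq V] (H : Finset (Finset V)) (S : Finset V) : ℕ :=
  (H.filter fun e => S ⊆ e).card

/-- The list of edges of the `(k,ℓ)`-path whose vertices are the list `l` (in order):
the `j`-th edge consists of the `k` consecutive vertices starting at position `j * (k - ℓ)`.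
(For `ℓ = k - 1` this gives the edges of a tight path.) -/
def klEdges {V : Type} [DecidableEq V] (k ℓ : ℕ) (l : List V) : List (Finset V) :=
  (List.range ((l.length - ℓ) / (k - ℓ))).map fun j => ((l.drop (j * (k - ℓ))).take k).toFinset

/-- `l` is the vertex list of a properly colored `(k,ℓ)`-path in the colored
hypergraph `(H, φ)`: the vertices are distinct, the length is `k + (t-1)(k-ℓ)` for
some number `t ≥ 1` of edges, all edges belong to `H`, and any two distinct
intersecting edges receive distinct colors.
(Taking `ℓ = k - 1` gives properly colored tight paths.) -/
def IsPcPath {V : Type} [DecidableEq V] (H : Finset (Finset V)) (φ : Finset V → ℕ)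
    (k ℓ : ℕ) (l : List V) : Prop :=
  l.Nodup ∧ k ≤ l.length ∧ (k - ℓ) ∣ (l.length - k) ∧
    (∀ e ∈ klEdges k ℓ l, e ∈ H) ∧
    (∀ e ∈ klEdges k ℓ l, ∀ f ∈ klEdges k ℓ l, e ≠ f → (e ∩ f).Nonempty → φ e ≠ φ f)

/-- A properly colored `v`-absorber: a `(4k-4)`-tuple `w` of vertices such that both
`w₁ … w_{4k-4}` and `w₁ … w_{2k-2} v w_{2k-1} … w_{4k-4}` span properly colored tight
paths in `(H, φ)`. -/
def IsPcAbsorber (n k : ℕ) (H : Finset (Finset (Fin n))) (φ : Finset (Fin n) → ℕ)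
    (v : Fin n) (w : Fin (4 * k - 4) → Fin n) : Prop :=
  IsPcPath H φ k (k - 1) (List.ofFn w) ∧
  IsPcPath H φ k (k - 1)
    ((List.ofFn w).take (2 * k - 2) ++ v :: (List.ofFn w).drop (2 * k - 2))

namespace PcAbsorbers

variable {V : Type}

theorem drop_append_length_sub {l₁ l₂ : List V} {m : ℕ} (h : m ≤ l₂.length) :
    (l₁ ++ l₂).drop ((l₁ ++ l₂).length - m) = l₂.drop (l₂.length - m) := by
  rw [List.drop_append, List.drop_eq_nil_of_le (by simp; omega), List.nil_append]
  congr 1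
  simp; omega

theorem ofFn_getD_eq_self {l : List V} {m : ℕ} (h : l.length = m) (d : V) :
    List.ofFn (fun i : Fin m => l.getD i d) = l :=
  List.ext_getElem (by simp [h]) fun i _ h₂ => by simp [List.getElem?_eq_getElem h₂]

theorem exists_card_ge_prod_of_le_card_cons {α : Type*} [Fintype α] [DecidableEq α]
    (P : List α → Prop) [DecidablePred P] (b : ℕ → ℝ) (hb : ∀ i, 0 ≤ b i) (hnil : P [])
    (m : ℕ)
    (hcons : ∀ r, P r → r.length < m → b r.length ≤ #({x | P (x :: r)} : Finset α)) :
    ∃ s : Finset (List α), (∀ r ∈ s, r.length = m ∧ P r) ∧ ∏ i ∈ range m, b i ≤ #s := by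
  induction m with
  | zero => exact ⟨{[]}, by simp [hnil], by simp⟩
  | succ m ih =>
    obtain ⟨s, hs, hprod⟩ := ih fun r hr hlen => hcons r hr (by omega)
    refine ⟨s.biUnion fun r => ({x | P (x :: r)} : Finset α).image (· :: r), ?_, ?_⟩
    · simp only [mem_biUnion, mem_image, mem_filter, mem_univ, true_and]
      rintro _ ⟨r, hr, x, hx, rfl⟩
      exact ⟨by simp [(hs r hr).1], hx⟩
    · have hdisj : (s : Set (List α)).PairwiseDisjoint
          fun r => ({x | P (x :: r)} : Finset α).image (· :: r) := fun r₁ _ r₂ _ hne =>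
        disjoint_left.2 <| by
          simp only [mem_image]
          rintro _ ⟨x, -, rfl⟩ ⟨y, -, h⟩
          exact hne (List.cons_eq_cons.1 h).2.symm
      rw [card_biUnion hdisj, prod_range_succ, Nat.cast_sum]
      calc (∏ i ∈ range m, b i) * b m ≤ #s * b m := mul_le_mul_of_nonneg_right hprod (hb m)
        _ = ∑ r ∈ s, b r.length := by
          rw [sum_congr rfl fun r hr => by rw [(hs r hr).1], sum_const, nsmul_eq_mul]
        _ ≤ _ := sum_le_sum fun r hr => by
          rw [card_image_of_injective _ fun x y h => (List.cons_eq_cons.1 h).1]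
          exact hcons r (hs r hr).2 (by rw [(hs r hr).1]; omega)

/-- The vertices of `r` are listed latest first: the earliest `a` of them are placed to the left
of `mid` (each new one at the left end), all later ones to its right (each at the right end). -/
def growAround (a : ℕ) (mid r : List V) : List V :=
  r.drop (r.length - a) ++ mid ++ (r.take (r.length - a)).reverse

variable {a : ℕ} {mid r : List V}

@[simp]
theorem length_growAround : (growAround a mid r).length = r.length + mid.length := by
  simp [growAround]; omega

theorem growAround_of_length_le (h : r.length ≤ a) : growAround a mid r = r ++ mid := by
  simp [growAround, Nat.sub_eq_zero_of_le h]

theorem growAround_cons_of_le_length (h : a ≤ r.length) (x : V) :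
    growAround a mid (x :: r) = growAround a mid r ++ [x] := by
  have hsub : (x :: r).length - a = r.length - a + 1 := by simp; omega
  simp only [growAround, hsub, List.drop_succ_cons, List.take_succ_cons, List.reverse_cons]
  simp

theorem notMem_growAround_nil {x : V} (hx : x ∉ growAround a mid r) :
    x ∉ growAround a [] r := by
  simp_all [growAround]

theorem drop_growAround {m : ℕ} (hm : m ≤ r.length - a) :
    (growAround a mid r).drop ((growAround a mid r).length - m) =
      (growAround a [] r).drop ((growAround a [] r).length - m) := by
  simp only [growAround, List.append_nil]
  rw [drop_append_length_sub (by simpa using hm), drop_append_length_sub (by simpa using hm)]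

theorem take_append_drop_growAround (h : a ≤ r.length) :
    (growAround a [] r).take a ++ mid ++ (growAround a [] r).drop a = growAround a mid r := by
  have hlen : (r.drop (r.length - a)).length = a := by simp; omega
  simp only [growAround, List.append_nil]
  rw [List.take_left' hlen, List.drop_left' hlen]

theorem eq_of_growAround_nil_eq {r' : List V} (hlen : r.length = r'.length)
    (h : growAround a [] r = growAround a [] r') : r = r' := by
  simp only [growAround, List.append_nil] at h
  obtain ⟨hdrop, htake⟩ := List.append_inj h (by simp [hlen])
  rw [← List.take_append_drop (r.length - a) r, ← List.take_append_drop (r'.length - a) r',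
    List.reverse_inj.1 htake, hdrop]

variable [DecidableEq V]

def window (k : ℕ) (l : List V) (j : ℕ) : Finset V := ((l.drop j).take k).toFinset

theorem klEdges_pred_eq_map_window {k : ℕ} (hk : 1 ≤ k) (l : List V) :
    klEdges k (k - 1) l = (List.range (l.length - (k - 1))).map (window k l) := by
  simp [klEdges, window, show k - (k - 1) = 1 by omega]

theorem disjoint_window {k : ℕ} {l : List V} (hl : l.Nodup) {i j : ℕ} (hij : i + k ≤ j) :
    Disjoint (window k l i) (window k l j) := by
  have hd := List.disjoint_take_drop (hl.sublist (List.drop_sublist i l))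
    (Nat.le_sub_of_add_le' hij)
  rw [List.drop_drop, Nat.add_sub_cancel' (by omega)] at hd
  rw [window, window, Finset.disjoint_left]
  intro a ha hb
  simp only [List.mem_toFinset] at ha hb
  exact hd ha (List.mem_of_mem_take hb)

theorem window_cons_zero {k : ℕ} (hk : 1 ≤ k) (x : V) (l : List V) :
    window k (x :: l) 0 = insert x (l.take (k - 1)).toFinset := by
  obtain ⟨m, rfl⟩ : ∃ m, k = m + 1 := ⟨k - 1, by omega⟩
  simp [window]

@[simp]
theorem window_cons_succ (k : ℕ) (x : V) (l : List V) (j : ℕ) :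
    window k (x :: l) (j + 1) = window k l j := by
  simp [window]

theorem window_append_of_le {k : ℕ} {l l' : List V} {j : ℕ} (h : j + k ≤ l.length) :
    window k (l ++ l') j = window k l j := by
  rw [window, List.drop_append_of_le_length (by omega),
    List.take_append_of_le_length (by simp; omega), window]

theorem window_append_singleton_last {k : ℕ} (hk : 1 ≤ k) {l : List V} (x : V)
    (hl : k ≤ l.length + 1) :
    window k (l ++ [x]) (l.length + 1 - k) = insert x (l.drop (l.length + 1 - k)).toFinset := by
  rw [window, List.drop_append_of_le_length (by omega), List.take_of_length_le (by simp; omega)]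
  ext a
  simp

/-- The tight-path case of `IsPcPath`, phrased with windows and without the requirement
`k ≤ l.length`, so that it passes to prefixes. -/
structure IsPcTightSeq (H : Finset (Finset V)) (φ : Finset V → ℕ) (k : ℕ) (l : List V) :
    Prop where
  nodup : l.Nodup
  window_mem : ∀ j, j + k ≤ l.length → window k l j ∈ H
  color_ne : ∀ i j, i < j → j + k ≤ l.length → j < i + k →
    φ (window k l i) ≠ φ (window k l j)

variable {H : Finset (Finset V)} {φ : Finset V → ℕ} {k : ℕ} {l : List V} {v : V}

theorem isPcTightSeq_of_length_lt (hl : l.Nodup) (hlen : l.length < k) :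
    IsPcTightSeq H φ k l :=
  ⟨hl, fun _ _ => by omega, fun _ _ _ _ _ => by omega⟩

theorem IsPcTightSeq.isPcPath (h : IsPcTightSeq H φ k l) (hk : 1 ≤ k) (hlen : k ≤ l.length) :
    IsPcPath H φ k (k - 1) l := by
  refine ⟨h.nodup, hlen, by simp [show k - (k - 1) = 1 by omega], ?_, ?_⟩
  · simp only [klEdges_pred_eq_map_window hk, List.mem_map, List.mem_range]
    rintro _ ⟨j, hj, rfl⟩
    exact h.window_mem j (by omega)
  · simp only [klEdges_pred_eq_map_window hk, List.mem_map, List.mem_range]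
    rintro _ ⟨i, hi, rfl⟩ _ ⟨j, hj, rfl⟩ hne hmeet
    have overlap : ∀ {i j}, i < j → (window k l i ∩ window k l j).Nonempty → j < i + k :=
      fun hij hm => by
        by_contra hfar
        exact hm.ne_empty (disjoint_iff_inter_eq_empty.1 (disjoint_window h.nodup (by omega)))
    rcases lt_trichotomy i j with hij | rfl | hji
    · exact h.color_ne i j hij (by omega) (overlap hij hmeet)
    · exact absurd rfl hne
    · exact (h.color_ne j i hji (by omega) (overlap hji (by rwa [Finset.inter_comm]))).symm

theorem IsPcTightSeq.of_append {l' : List V} (h : IsPcTightSeq H φ k (l ++ l')) :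
    IsPcTightSeq H φ k l where
  nodup := h.nodup.sublist (List.sublist_append_left l l')
  window_mem j hj := by
    simpa [window_append_of_le hj] using h.window_mem j (by simp; omega)
  color_ne i j hij hj hji := by
    simpa [window_append_of_le hj, window_append_of_le (show i + k ≤ l.length by omega)]
      using h.color_ne i j hij (by simp; omega) hji

/- Windows past the end of a short `l` are truncated junk; they only forbid more colours. -/
def frontColors (φ : Finset V → ℕ) (k : ℕ) (l : List V) : Finset ℕ :=
  (range (k - 1)).image fun j => φ (window k l j)

def backColors (φ : Finset V → ℕ) (k : ℕ) (l : List V) : Finset ℕ :=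
  (range (k - 1)).image fun d => φ (window k l (l.length - k - d))

theorem card_frontColors_le : #(frontColors φ k l) ≤ k - 1 := card_image_le.trans (by simp)

theorem card_backColors_le : #(backColors φ k l) ≤ k - 1 := card_image_le.trans (by simp)

theorem card_toFinset_take_pred (hl : l.Nodup) (hlen : k ≤ l.length + 1) :
    #(l.take (k - 1)).toFinset = k - 1 := by
  rw [List.toFinset_card_of_nodup (hl.sublist (List.take_sublist _ _))]; simp; omega

theorem card_toFinset_drop (hl : l.Nodup) (hlen : k ≤ l.length + 1) :
    #(l.drop (l.length + 1 - k)).toFinset = k - 1 := by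
  rw [List.toFinset_card_of_nodup (hl.sublist (List.drop_sublist _ _))]; simp; omega

theorem IsPcTightSeq.cons (h : IsPcTightSeq H φ k l) (hk : 1 ≤ k) {x : V} (hx : x ∉ l)
    (hnew : k ≤ l.length + 1 → insert x (l.take (k - 1)).toFinset ∈ H ∧
      φ (insert x (l.take (k - 1)).toFinset) ∉ frontColors φ k l) :
    IsPcTightSeq H φ k (x :: l) where
  nodup := List.nodup_cons.2 ⟨hx, h.nodup⟩
  window_mem
    | 0, hj => by rw [window_cons_zero hk]; exact (hnew (by simpa using hj)).1
    | j + 1, hj => by rw [window_cons_succ]; exact h.window_mem j (by simp at hj; omega)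
  color_ne
    | 0, j + 1, _, hj, hjk => by
      rw [window_cons_zero hk, window_cons_succ]
      intro heq
      exact (hnew (by simp at hj; omega)).2
        (mem_image.2 ⟨j, mem_range.2 (by omega), heq.symm⟩)
    | i + 1, j + 1, hij, hj, hjk => by
      rw [window_cons_succ, window_cons_succ]
      exact h.color_ne i j (by omega) (by simp at hj; omega) (by omega)

theorem IsPcTightSeq.append_singleton (h : IsPcTightSeq H φ k l) (hk : 1 ≤ k) {x : V}
    (hx : x ∉ l)
    (hnew : k ≤ l.length + 1 → insert x (l.drop (l.length + 1 - k)).toFinset ∈ H ∧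
      φ (insert x (l.drop (l.length + 1 - k)).toFinset) ∉ backColors φ k l) :
    IsPcTightSeq H φ k (l ++ [x]) where
  nodup := List.nodup_append.2 ⟨h.nodup, by simp, fun a ha b hb => by rintro rfl; simp_all⟩
  window_mem j hj := by
    simp only [List.length_append, List.length_singleton] at hj
    rcases Nat.lt_or_ge l.length (j + k) with hlast | hold
    · obtain rfl : j = l.length + 1 - k := by omega
      rw [window_append_singleton_last hk x (by omega)]
      exact (hnew (by omega)).1
    · rw [window_append_of_le hold]
      exact h.window_mem j hold
  color_ne i j hij hj hjk := by
    simp only [List.length_append, List.length_singleton] at hj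
    rw [window_append_of_le (show i + k ≤ l.length by omega)]
    rcases Nat.lt_or_ge l.length (j + k) with hlast | hold
    · obtain rfl : j = l.length + 1 - k := by omega
      rw [window_append_singleton_last hk x (by omega)]
      intro heq
      refine (hnew (by omega)).2 (mem_image.2 ⟨l.length - k - i, mem_range.2 (by omega), ?_⟩)
      rw [show l.length - k - (l.length - k - i) = i by omega, heq]
    · rw [window_append_of_le hold]
      exact h.color_ne i j hij hold hjk

/-- The state of the greedy construction of a `v`-absorber after the choices `r` (latest first):
the first `2k - 2` chosen vertices are `w_{2k-2}, …, w_1`, the later ones `w_{2k-1}, w_{2k}, …`. -/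
def IsPartialAbsorber (H : Finset (Finset V)) (φ : Finset V → ℕ) (k : ℕ) (v : V)
    (r : List V) : Prop :=
  IsPcTightSeq H φ k (growAround (2 * k - 2) [v] r) ∧
    IsPcTightSeq H φ k (growAround (2 * k - 2) [] r)

theorem isPartialAbsorber_nil (hk : 2 ≤ k) (v : V) : IsPartialAbsorber H φ k v [] := by
  simp only [IsPartialAbsorber,
    growAround_of_length_le (List.length_nil.trans_le (Nat.zero_le _)), List.nil_append]
  exact ⟨isPcTightSeq_of_length_lt (List.nodup_singleton v) (by simp; omega),
    isPcTightSeq_of_length_lt List.nodup_nil (by simp; omega)⟩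

noncomputable def stepBound (k : ℕ) (γ N : ℝ) (i : ℕ) : ℝ :=
  if 2 * k - 2 ≤ i ∧ i < 3 * k - 3 then γ * N else N / 2

theorem stepBound_nonneg {k : ℕ} {γ N : ℝ} (hγ : 0 ≤ γ) (hN : 0 ≤ N) (i : ℕ) :
    0 ≤ stepBound k γ N i := by
  unfold stepBound; split_ifs <;> positivity

section Counting

variable [Fintype V]

def colorLink (H : Finset (Finset V)) (φ : Finset V → ℕ) (S : Finset V) (L : Finset ℕ) :
    Finset V :=
  {x | x ∉ S ∧ insert x S ∈ H ∧ φ (insert x S) ∉ L}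

theorem mem_colorLink {S : Finset V} {L : Finset ℕ} {x : V} :
    x ∈ colorLink H φ S L ↔ x ∉ S ∧ insert x S ∈ H ∧ φ (insert x S) ∉ L := by
  simp [colorLink]

theorem colorLink_union (S : Finset V) (L L' : Finset ℕ) :
    colorLink H φ S (L ∪ L') = colorLink H φ S L ∩ colorLink H φ S L' := by
  ext x
  simp only [mem_colorLink, mem_inter, mem_union]
  tauto

def frontLink (H : Finset (Finset V)) (φ : Finset V → ℕ) (k : ℕ) (l : List V) : Finset V :=
  colorLink H φ (l.take (k - 1)).toFinset (frontColors φ k l)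

def backLink (H : Finset (Finset V)) (φ : Finset V → ℕ) (k : ℕ) (l : List V) : Finset V :=
  colorLink H φ (l.drop (l.length + 1 - k)).toFinset (backColors φ k l)

theorem IsPartialAbsorber.cons_left (hr : IsPartialAbsorber H φ k v r) (hk : 1 ≤ k)
    (hlen : r.length < 2 * k - 2) {x : V} (hx : x ∉ r ++ [v])
    (hnew : k ≤ r.length + 2 → x ∈ frontLink H φ k (r ++ [v])) :
    IsPartialAbsorber H φ k v (x :: r) := by
  have hu := hr.1
  rw [growAround_of_length_le hlen.le] at hu
  have hxu : IsPcTightSeq H φ k (x :: r ++ [v]) :=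
    hu.cons hk hx fun hl => (mem_colorLink.1 (hnew (by simpa using hl))).2
  rw [IsPartialAbsorber, growAround_of_length_le (by simp; omega),
    growAround_of_length_le (by simp; omega), List.append_nil]
  exact ⟨hxu, hxu.of_append⟩

theorem IsPartialAbsorber.cons_right (hr : IsPartialAbsorber H φ k v r) (hk : 1 ≤ k)
    (hlen : 2 * k - 2 ≤ r.length) {x : V} (hx : x ∉ growAround (2 * k - 2) [v] r)
    (hu : x ∈ backLink H φ k (growAround (2 * k - 2) [v] r))
    (hw : x ∈ backLink H φ k (growAround (2 * k - 2) [] r)) :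
    IsPartialAbsorber H φ k v (x :: r) := by
  rw [IsPartialAbsorber, growAround_cons_of_le_length hlen, growAround_cons_of_le_length hlen]
  exact ⟨hr.1.append_singleton hk hx fun _ => (mem_colorLink.1 hu).2,
    hr.2.append_singleton hk (notMem_growAround_nil hx) fun _ => (mem_colorLink.1 hw).2⟩

theorem hypDeg_le_card_colorLink_add {S : Finset V} (hH : ∀ e ∈ H, e.card = S.card + 1)
    (φ : Finset V → ℕ) (L : Finset ℕ) :
    hypDeg H S ≤ #(colorLink H φ S L) + ∑ i ∈ L, hypDeg (H.filter fun e => φ e = i) S := by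
  have hsub : H.filter (fun e => S ⊆ e) ⊆ (colorLink H φ S L).image (insert · S) ∪
      L.biUnion fun i => (H.filter fun e => φ e = i).filter fun e => S ⊆ e := by
    intro e he
    rw [mem_filter] at he
    obtain ⟨x, hxS, rfl⟩ := exists_eq_insert_iff.2 ⟨he.2, (hH e he.1).symm⟩
    by_cases hL : φ (insert x S) ∈ L
    · exact mem_union_right _ (mem_biUnion.2 ⟨_, hL, by simp [he.1]⟩)
    · exact mem_union_left _ (mem_image_of_mem _ (mem_colorLink.2 ⟨hxS, he.1, hL⟩))
  calc hypDeg H S ≤ #((colorLink H φ S L).image (insert · S)) +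
        #(L.biUnion fun i => (H.filter fun e => φ e = i).filter fun e => S ⊆ e) :=
        (card_le_card hsub).trans (card_union_le _ _)
    _ ≤ _ := add_le_add card_image_le card_biUnion_le

structure IsDiracColored (H : Finset (Finset V)) (φ : Finset V → ℕ) (k : ℕ) (γ c : ℝ) :
    Prop where
  card_eq : ∀ e ∈ H, e.card = k
  le_hypDeg : ∀ S : Finset V, S.card = k - 1 → (1 / 2 + γ) * Fintype.card V ≤ hypDeg H S
  colorDeg_le : ∀ (i : ℕ) (S : Finset V), S.card = k - 1 →
    (hypDeg (H.filter fun e => φ e = i) S : ℝ) ≤ c * Fintype.card V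

variable {γ c : ℝ}

theorem IsDiracColored.card_colorLink_ge (hH : IsDiracColored H φ k γ c) (hk : 1 ≤ k)
    {S : Finset V} (hS : S.card = k - 1) {L : Finset ℕ} {m : ℕ} (hL : #L ≤ m) :
    (1 / 2 + γ) * Fintype.card V - m * (c * Fintype.card V) ≤ #(colorLink H φ S L) := by
  have hcN : 0 ≤ c * Fintype.card V := (Nat.cast_nonneg _).trans (hH.colorDeg_le 0 S hS)
  have hdeg : (hypDeg H S : ℝ) ≤ #(colorLink H φ S L) +
      ∑ i ∈ L, (hypDeg (H.filter fun e => φ e = i) S : ℝ) := by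
    exact_mod_cast hypDeg_le_card_colorLink_add (fun e he => by rw [hH.card_eq e he]; omega) φ L
  have hcolors : ∑ i ∈ L, (hypDeg (H.filter fun e => φ e = i) S : ℝ) ≤
      m * (c * Fintype.card V) :=
    calc _ ≤ #L * (c * Fintype.card V) := by
          simpa using sum_le_card_nsmul L _ _ fun i _ => hH.colorDeg_le i S hS
      _ ≤ m * (c * Fintype.card V) :=
          mul_le_mul_of_nonneg_right (by exact_mod_cast hL) hcN
  linarith [hH.le_hypDeg S hS]

theorem IsDiracColored.card_frontLink_ge (hH : IsDiracColored H φ k γ c) (hk : 1 ≤ k)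
    (hl : l.Nodup) (hlen : k ≤ l.length + 1) :
    (1 / 2 + γ) * Fintype.card V - k * (c * Fintype.card V) ≤ #(frontLink H φ k l) :=
  hH.card_colorLink_ge hk (card_toFinset_take_pred hl hlen) (card_frontColors_le.trans (by omega))

theorem IsDiracColored.card_backLink_ge (hH : IsDiracColored H φ k γ c) (hk : 1 ≤ k)
    (hl : l.Nodup) (hlen : k ≤ l.length + 1) :
    (1 / 2 + γ) * Fintype.card V - k * (c * Fintype.card V) ≤ #(backLink H φ k l) :=
  hH.card_colorLink_ge hk (card_toFinset_drop hl hlen) (card_backColors_le.trans (by omega))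

theorem card_sub_card_le_card_filter {A U : Finset V} {P : V → Prop} [DecidablePred P]
    (h : ∀ x ∈ A, x ∉ U → P x) : (#A : ℝ) - #U ≤ #({x | P x} : Finset V) := by
  have hsub : A \ U ⊆ ({x | P x} : Finset V) := fun x hx => by
    rw [mem_sdiff] at hx
    simpa using h x hx.1 hx.2
  have : #A ≤ #({x | P x} : Finset V) + #U :=
    card_le_card_sdiff_add_card.trans (Nat.add_le_add_right (card_le_card hsub) _)
  rw [sub_le_iff_le_add]
  exact_mod_cast this

theorem card_add_card_sub_card_le_card_inter (A B : Finset V) :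
    (#A : ℝ) + #B - Fintype.card V ≤ #(A ∩ B) := by
  have := card_union_add_card_inter A B
  have := card_le_univ (A ∪ B)
  rw [sub_le_iff_le_add]
  exact_mod_cast (by omega : #A + #B ≤ #(A ∩ B) + Fintype.card V)

open scoped Classical in
theorem IsDiracColored.half_le_card_cons_left (hH : IsDiracColored H φ k γ c) (hk : 2 ≤ k)
    (hγ : γ ≤ 1 / 2) (hc : 2 * k * (c * Fintype.card V) ≤ γ * Fintype.card V / 2)
    (hN : 8 * k ≤ γ * Fintype.card V) (hr : IsPartialAbsorber H φ k v r)
    (hlen : r.length < 2 * k - 2) :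
    (Fintype.card V : ℝ) / 2 ≤ #({x | IsPartialAbsorber H φ k v (x :: r)} : Finset V) := by
  have hnd : (r ++ [v]).Nodup := by simpa [growAround_of_length_le hlen.le] using hr.1.nodup
  have hU : (#(r ++ [v]).toFinset : ℝ) ≤ 4 * k := by
    have := List.toFinset_card_le (r ++ [v])
    simp only [List.length_append, List.length_singleton] at this
    exact_mod_cast (by omega : #(r ++ [v]).toFinset ≤ 4 * k)
  by_cases hedge : k ≤ r.length + 2
  · have hA := hH.card_frontLink_ge (by omega) hnd (by simpa using hedge)
    have hT := card_sub_card_le_card_filter (U := (r ++ [v]).toFinset)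
      (P := fun x => IsPartialAbsorber H φ k v (x :: r)) fun x hx hxU =>
        hr.cons_left (by omega) hlen (mt List.mem_toFinset.2 hxU) fun _ => hx
    linarith
  · have hT := card_sub_card_le_card_filter (A := univ) (U := (r ++ [v]).toFinset)
      (P := fun x => IsPartialAbsorber H φ k v (x :: r)) fun x _ hxU =>
        hr.cons_left (by omega) hlen (mt List.mem_toFinset.2 hxU) fun h => absurd h hedge
    rw [card_univ] at hT
    nlinarith

open scoped Classical in
theorem IsPartialAbsorber.card_backLink_inter_sub_le (hr : IsPartialAbsorber H φ k v r)
    (hk : 1 ≤ k) (hlen : 2 * k - 2 ≤ r.length) :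
    (#(backLink H φ k (growAround (2 * k - 2) [v] r) ∩
        backLink H φ k (growAround (2 * k - 2) [] r)) : ℝ) - (r.length + 1) ≤
      #({x | IsPartialAbsorber H φ k v (x :: r)} : Finset V) := by
  have hT := card_sub_card_le_card_filter (U := (growAround (2 * k - 2) [v] r).toFinset)
    (P := fun x => IsPartialAbsorber H φ k v (x :: r)) fun x hx hxU =>
      hr.cons_right hk hlen (mt List.mem_toFinset.2 hxU) (mem_inter.1 hx).1 (mem_inter.1 hx).2
  have hU := List.toFinset_card_le (growAround (2 * k - 2) [v] r)
  simp only [length_growAround, List.length_singleton] at hU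
  have hU' : (#(growAround (2 * k - 2) [v] r).toFinset : ℝ) ≤ r.length + 1 := by
    exact_mod_cast hU
  linarith

open scoped Classical in
theorem IsDiracColored.mul_le_card_cons_middle (hH : IsDiracColored H φ k γ c) (hk : 1 ≤ k)
    (hc : 2 * k * (c * Fintype.card V) ≤ γ * Fintype.card V / 2)
    (hN : 8 * k ≤ γ * Fintype.card V) (hr : IsPartialAbsorber H φ k v r)
    (hlen : 2 * k - 2 ≤ r.length) (hlen' : r.length < 3 * k - 3) :
    γ * Fintype.card V ≤ #({x | IsPartialAbsorber H φ k v (x :: r)} : Finset V) := by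
  have hu := hH.card_backLink_ge hk hr.1.nodup (by simp; omega)
  have hw := hH.card_backLink_ge hk hr.2.nodup (by simp; omega)
  have hinter := card_add_card_sub_card_le_card_inter
    (backLink H φ k (growAround (2 * k - 2) [v] r)) (backLink H φ k (growAround (2 * k - 2) [] r))
  have hT := hr.card_backLink_inter_sub_le hk hlen
  have hr4 : (r.length : ℝ) + 1 ≤ 4 * k := by exact_mod_cast (by omega : r.length + 1 ≤ 4 * k)
  linarith

open scoped Classical in
theorem IsDiracColored.half_le_card_cons_right (hH : IsDiracColored H φ k γ c) (hk : 1 ≤ k)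
    (hc : 2 * k * (c * Fintype.card V) ≤ γ * Fintype.card V / 2)
    (hN : 8 * k ≤ γ * Fintype.card V) (hr : IsPartialAbsorber H φ k v r)
    (hlen : 3 * k - 3 ≤ r.length) (hlen' : r.length < 4 * k - 4) :
    (Fintype.card V : ℝ) / 2 ≤ #({x | IsPartialAbsorber H φ k v (x :: r)} : Finset V) := by
  set lu := growAround (2 * k - 2) [v] r
  set lw := growAround (2 * k - 2) [] r
  -- `v` lies more than `k - 1` places from the right end, so both paths end alike
  have hsame : lu.drop (lu.length + 1 - k) = lw.drop (lw.length + 1 - k) := by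
    have e : ∀ l : List V, l.length + 1 - k = l.length - (k - 1) := fun l => by omega
    rw [e, e]
    exact drop_growAround (by omega)
  have hinter : backLink H φ k lu ∩ backLink H φ k lw =
      colorLink H φ (lw.drop (lw.length + 1 - k)).toFinset
        (backColors φ k lu ∪ backColors φ k lw) := by
    rw [backLink, backLink, hsame, colorLink_union]
  have hA := hH.card_colorLink_ge hk (card_toFinset_drop hr.2.nodup (by simp; omega))
    (L := backColors φ k lu ∪ backColors φ k lw) (m := 2 * k)
    (((card_union_le _ _).trans (add_le_add card_backColors_le card_backColors_le)).trans
      (by omega))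
  have hT := hr.card_backLink_inter_sub_le hk (by omega)
  rw [hinter] at hT
  have hr4 : (r.length : ℝ) + 1 ≤ 4 * k := by exact_mod_cast (by omega : r.length + 1 ≤ 4 * k)
  push_cast at hA
  linarith

open scoped Classical in
theorem IsDiracColored.stepBound_le_card_cons (hH : IsDiracColored H φ k γ c) (hk : 2 ≤ k)
    (hγ : γ ≤ 1 / 2) (hc : 2 * k * (c * Fintype.card V) ≤ γ * Fintype.card V / 2)
    (hN : 8 * k ≤ γ * Fintype.card V) (hr : IsPartialAbsorber H φ k v r)
    (hlen : r.length < 4 * k - 4) :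
    stepBound k γ (Fintype.card V) r.length ≤
      #({x | IsPartialAbsorber H φ k v (x :: r)} : Finset V) := by
  unfold stepBound
  split_ifs with hmid
  · exact hH.mul_le_card_cons_middle (by omega) hc hN hr hmid.1 hmid.2
  · rcases Nat.lt_or_ge r.length (2 * k - 2) with hleft | hright
    · exact hH.half_le_card_cons_left hk hγ hc hN hr hleft
    · exact hH.half_le_card_cons_right (by omega) hc hN hr (by omega) hlen

end Counting

theorem prod_stepBound (k : ℕ) (γ N : ℝ) :
    ∏ i ∈ range (4 * k - 4), stepBound k γ N i =
      (γ * N) ^ (k - 1) * (N / 2) ^ (3 * k - 3) := by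
  have hmid : #{i ∈ range (4 * k - 4) | 2 * k - 2 ≤ i ∧ i < 3 * k - 3} = k - 1 := by
    rw [show {i ∈ range (4 * k - 4) | 2 * k - 2 ≤ i ∧ i < 3 * k - 3} =
      Ico (2 * k - 2) (3 * k - 3) by ext i; simp; omega, Nat.card_Ico]
    omega
  have hrest : #{i ∈ range (4 * k - 4) | ¬(2 * k - 2 ≤ i ∧ i < 3 * k - 3)} = 3 * k - 3 := by
    have := card_filter_add_card_filter_not (s := range (4 * k - 4))
      (p := fun i => 2 * k - 2 ≤ i ∧ i < 3 * k - 3)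
    rw [card_range, hmid] at this
    omega
  simp only [stepBound]
  rw [prod_ite, prod_const, prod_const, hmid, hrest]

theorem four_mul_half_pow_le {k : ℕ} (hk : 1 ≤ k) {γ N : ℝ} (hγ₀ : 0 ≤ γ)
    (hγ : γ ≤ (1 / 4) ^ k) :
    4 * (γ / 2) ^ k * N ^ (4 * k - 4) ≤ (γ * N) ^ (k - 1) * (N / 2) ^ (3 * k - 3) := by
  obtain ⟨m, rfl⟩ : ∃ m, k = m + 1 := ⟨k - 1, by omega⟩
  have e : ∀ j, j * (m + 1) - j = j * m := fun j => by rw [mul_add, mul_one, Nat.add_sub_cancel]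
  rw [e, e, Nat.add_sub_cancel]
  have h2γ : 2 * γ ≤ (1 / 4) ^ m := by
    rw [pow_succ] at hγ
    nlinarith [pow_nonneg (show (0 : ℝ) ≤ 1 / 4 by norm_num) m]
  calc 4 * (γ / 2) ^ (m + 1) * N ^ (4 * m) = 2 * γ * (γ / 2 * N ^ 4) ^ m := by
        rw [pow_mul, mul_pow, pow_succ]; ring
    _ ≤ (1 / 4) ^ m * (γ / 2 * N ^ 4) ^ m := by gcongr
    _ = (γ * N) ^ m * (N / 2) ^ (3 * m) := by rw [pow_mul, ← mul_pow, ← mul_pow]; ring_nf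

theorem two_mul_mul_le_half {k : ℕ} (hk : 1 ≤ k) {γ c : ℝ} (hγ₀ : 0 ≤ γ) (hγ : γ ≤ 2)
    (hc : c ≤ 4 * (γ / 2) ^ k / (3 * (k : ℝ)) ^ 2) : 2 * k * c ≤ γ / 2 := by
  have hk' : (1 : ℝ) ≤ k := by exact_mod_cast hk
  have hpow : (γ / 2) ^ k ≤ γ / 2 := pow_le_of_le_one (by positivity) (by linarith) (by omega)
  have hc' : c * (9 * k ^ 2) ≤ 2 * γ := by
    rw [le_div_iff₀ (by positivity)] at hc
    linarith
  nlinarith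

theorem isPcAbsorber_of_isPartialAbsorber {n k : ℕ} {H : Finset (Finset (Fin n))}
    {φ : Finset (Fin n) → ℕ} {v : Fin n} {r : List (Fin n)} (hk : 2 ≤ k)
    (hlen : r.length = 4 * k - 4) (hr : IsPartialAbsorber H φ k v r) :
    IsPcAbsorber n k H φ v fun i => (growAround (2 * k - 2) [] r).getD i v := by
  have hmid := take_append_drop_growAround (mid := [v]) (show 2 * k - 2 ≤ r.length by omega)
  rw [List.append_assoc, List.singleton_append] at hmid
  rw [IsPcAbsorber, ofFn_getD_eq_self (by simp [hlen]), hmid]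
  exact ⟨hr.2.isPcPath (by omega) (by simp; omega), hr.1.isPcPath (by omega) (by simp; omega)⟩

theorem IsDiracColored.prod_stepBound_le_card_pcAbsorbers {n k : ℕ}
    {H : Finset (Finset (Fin n))} {φ : Finset (Fin n) → ℕ} {γ c : ℝ}
    (hH : IsDiracColored H φ k γ c) (hk : 2 ≤ k) (hγ₀ : 0 ≤ γ) (hγ : γ ≤ 1 / 2)
    (hc : 2 * k * (c * n) ≤ γ * n / 2) (hN : 8 * k ≤ γ * n) (v : Fin n) :
    ∏ i ∈ range (4 * k - 4), stepBound k γ n i ≤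
      Nat.card {w : Fin (4 * k - 4) → Fin n // IsPcAbsorber n k H φ v w} := by
  classical
  obtain ⟨s, hs, hprod⟩ := exists_card_ge_prod_of_le_card_cons (IsPartialAbsorber H φ k v)
    (stepBound k γ n) (stepBound_nonneg hγ₀ n.cast_nonneg) (isPartialAbsorber_nil hk v)
    (4 * k - 4) fun r hr hlen => by
      simpa using hH.stepBound_le_card_cons hk hγ (by simpa using hc) (by simpa using hN) hr hlen
  refine hprod.trans ?_
  rw [Nat.card_eq_fintype_card, Fintype.card_subtype, Nat.cast_le]
  refine card_le_card_of_injOn (fun r i => (growAround (2 * k - 2) [] r).getD i v)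
    (fun r hr => ?_) fun r₁ hr₁ r₂ hr₂ heq => ?_
  · simpa using isPcAbsorber_of_isPartialAbsorber hk (hs r hr).1 (hs r hr).2
  · have := congrArg List.ofFn heq
    rw [ofFn_getD_eq_self (by simp [(hs r₁ hr₁).1]),
      ofFn_getD_eq_self (by simp [(hs r₂ hr₂).1])] at this
    exact eq_of_growAround_nil_eq (by rw [(hs r₁ hr₁).1, (hs r₂ hr₂).1]) this

end PcAbsorbers

open PcAbsorbers

/-- in a Dirac-type colored `k`-graph with locally bounded colors,
every vertex has many properly colored absorbers. -/
theorem stmt_10 (k : ℕ) (hk : 3 ≤ k) :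
    ∃ γ₀ : ℝ, 0 < γ₀ ∧ ∀ γ : ℝ, 0 < γ → γ ≤ γ₀ →
      ∃ n₀ : ℕ, ∀ n : ℕ, n₀ ≤ n →
        ∀ c : ℝ, c ≤ 4 * (γ/2)^k / (3 * (k : ℝ))^2 →
          ∀ (H : Finset (Finset (Fin n))) (φ : Finset (Fin n) → ℕ),
            (∀ e ∈ H, e.card = k) →
            (∀ S : Finset (Fin n), S.card = k - 1 →
              ((1 : ℝ)/2 + γ) * n ≤ (hypDeg H S : ℝ)) →
            (∀ i : ℕ, ∀ S : Finset (Fin n), S.card = k - 1 →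
              (hypDeg (H.filter fun e => φ e = i) S : ℝ) ≤ c * n) →
            ∀ v : Fin n,
              4 * (γ/2)^k * (n : ℝ)^(4 * k - 4) ≤
                (Nat.card {w : Fin (4 * k - 4) → Fin n //
                  IsPcAbsorber n k H φ v w} : ℝ) := by
  refine ⟨(1 / 4) ^ k, by positivity, fun γ hγ hγk => ⟨⌈8 * k / γ⌉₊,
    fun n hn c hc H φ hcard hdeg hcol v => ?_⟩⟩
  have hH : IsDiracColored H φ k γ c := ⟨hcard, by simpa using hdeg, by simpa using hcol⟩
  have hγ2 : γ ≤ 1 / 2 :=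
    hγk.trans ((pow_le_of_le_one (by norm_num) (by norm_num) (by omega)).trans (by norm_num))
  have hN : 8 * k ≤ γ * n := by
    have := (Nat.le_ceil (8 * k / γ : ℝ)).trans (Nat.cast_le.2 hn)
    rw [div_le_iff₀ hγ] at this
    linarith
  have hc' : 2 * k * (c * n) ≤ γ * n / 2 := by
    nlinarith [two_mul_mul_le_half (by omega) hγ.le (by linarith) hc, n.cast_nonneg (α := ℝ)]
  calc 4 * (γ / 2) ^ k * (n : ℝ) ^ (4 * k - 4)
      ≤ (γ * n) ^ (k - 1) * (n / 2) ^ (3 * k - 3) := four_mul_half_pow_le (by omega) hγ.le hγk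
    _ = ∏ i ∈ range (4 * k - 4), stepBound k γ n i := (prod_stepBound k γ n).symm
    _ ≤ _ := hH.prod_stepBound_le_card_pcAbsorbers (by omega) hγ.le hγ2 hc' hN v
end
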